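/- arXiv:2308.11330 — 2 statements merged into one kernel-verified Lean document; each statement's English description precedes it below -/
import Mathlib

section
/- Let H be a complex Hilbert space with orthonormal basis {e_k}_{k≥1} and set f_k = e_k + e_{k+1} for k ≥ 1. Then for every finitely supported scalar sequence {c_k}_{k≥1} ⊂ ℂ one has ‖∑_{k} c_k f_{k+1}‖ = ‖∑_{k} c_k f_k‖, and consequently there exists a linear isometry W : H → H with W f_k = f_{k+1} for all k ≥ 1. -/
/-! The shift `e k ↦ e (k + 1)` carries an orthonormal basis to an orthonormal family, so it
extends to a linear isometry `W` of `H`; being linear, `W` sends `f k = e k + e (k + 1)` to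
`f (k + 1)`, and the norm identity is `‖W x‖ = ‖x‖` for `x = ∑ c k • f k`. -/

namespace HilbertBasis

variable {ι 𝕜 E F : Type*} [RCLike 𝕜] [NormedAddCommGroup E] [InnerProductSpace 𝕜 E]
  [NormedAddCommGroup F] [InnerProductSpace 𝕜 F] [CompleteSpace F]

noncomputable def linearIsometryOfOrthonormal (b : HilbertBasis ι 𝕜 E) {v : ι → F}
    (hv : Orthonormal 𝕜 v) : E →ₗᵢ[𝕜] F :=
  hv.orthogonalFamily.linearIsometry.comp b.repr.toLinearIsometry

@[simp]
theorem linearIsometryOfOrthonormal_apply_self (b : HilbertBasis ι 𝕜 E) {v : ι → F}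
    (hv : Orthonormal 𝕜 v) (i : ι) : b.linearIsometryOfOrthonormal hv (b i) = v i := by
  classical
  simp [linearIsometryOfOrthonormal, b.repr_self, hv.orthogonalFamily.linearIsometry_apply_single]

end HilbertBasis

theorem HilbertBasis.exists_linearIsometry_shift {𝕜 E : Type*} [RCLike 𝕜] [NormedAddCommGroup E]
    [InnerProductSpace 𝕜 E] [CompleteSpace E] (e : HilbertBasis ℕ 𝕜 E) :
    ∃ W : E →ₗᵢ[𝕜] E, ∀ k, W (e k) = e (k + 1) :=
  have hshift : Orthonormal 𝕜 fun k => e (k + 1) :=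
    e.orthonormal.comp _ fun _ _ => Nat.succ.inj
  ⟨e.linearIsometryOfOrthonormal hshift, e.linearIsometryOfOrthonormal_apply_self hshift⟩

/-- For `f_k = e_k + e_{k+1}` the shift `f_k ↦ f_{k+1}` preserves norms of finite
linear combinations, and hence extends to a linear isometry of `H`. -/
theorem sum_shifted_basis_isometric_shift
    {H : Type*} [NormedAddCommGroup H] [InnerProductSpace ℂ H] [CompleteSpace H]
    (e : HilbertBasis ℕ ℂ H) (f : ℕ → H) (hf : ∀ k, f k = e k + e (k + 1)) :
    (∀ c : ℕ →₀ ℂ,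
      ‖c.sum fun k a => a • f (k + 1)‖ = ‖c.sum fun k a => a • f k‖) ∧
    ∃ W : H →ₗᵢ[ℂ] H, ∀ k, W (f k) = f (k + 1) := by
  obtain ⟨W, hWe⟩ := e.exists_linearIsometry_shift
  have hWf : ∀ k, W (f k) = f (k + 1) := fun k => by
    rw [hf, map_add, hWe, hWe, hf]
  refine ⟨fun c => ?_, W, hWf⟩
  calc ‖c.sum fun k a => a • f (k + 1)‖
      = ‖W (c.sum fun k a => a • f k)‖ := by simp only [map_finsuppSum, map_smul, hWf]
    _ = ‖c.sum fun k a => a • f k‖ := W.norm_map _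
end

section
/- Let {λ_k}_{k∈ℕ} and {γ_l}_{l∈ℕ} be complex numbers with |λ_k γ_l| < 1 for all k, l, and suppose there exists c ∈ (0,1) such that (1 − |λ_k γ_{l+1}|) ≤ c·(1 − |λ_k γ_l|) for all k, l ∈ ℕ. Then for all k ∈ ℕ and all l > m ≥ 1, the pseudo-hyperbolic distance between λ_k γ_l and λ_k γ_m satisfies |λ_k γ_l − λ_k γ_m| / |1 − conj(λ_k γ_l)·λ_k γ_m| ≥ (1 − c^{l−m})/(1 + c^{l−m}). -/
/-- Key algebraic identity for the pseudo-hyperbolic distance. -/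
lemma pseudohyp_sq_identity (a b : ℂ) :
    ‖1 - (starRingEnd ℂ) a * b‖ ^ 2 =
      ‖a - b‖ ^ 2 + (1 - ‖a‖ ^ 2) * (1 - ‖b‖ ^ 2) := by
  simp only [Complex.sq_norm, Complex.normSq_apply,
    Complex.sub_re, Complex.sub_im, Complex.mul_re, Complex.mul_im,
    Complex.one_re, Complex.one_im, Complex.conj_re, Complex.conj_im]
  ring

lemma decay_iter (lam gam : ℕ → ℂ) (c : ℝ)
    (hratio : ∀ k l : ℕ, 1 - ‖lam k * gam (l + 1)‖ ≤ c * (1 - ‖lam k * gam l‖))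
    (hc0 : 0 < c) :
    ∀ k m n : ℕ, 1 - ‖lam k * gam (m + n)‖ ≤ c ^ n * (1 - ‖lam k * gam m‖) := by
  intro k m n
  induction n with
  | zero => simp
  | succ n ih =>
      have h1 := hratio k (m + n)
      calc 1 - ‖lam k * gam (m + (n + 1))‖ ≤ c * (1 - ‖lam k * gam (m + n)‖) := by
            have : m + (n + 1) = (m + n) + 1 := by ring
            rw [this]; exact h1
        _ ≤ c * (c ^ n * (1 - ‖lam k * gam m‖)) := by
            exact mul_le_mul_of_nonneg_left ih hc0.le
        _ = c ^ (n + 1) * (1 - ‖lam k * gam m‖) := by ring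

/-- Under the geometric decay condition, the pseudo-hyperbolic distance between
`λ_k γ_l` and `λ_k γ_m` is bounded below by `(1 − c^{l−m})/(1 + c^{l−m})`. -/
theorem pseudohyperbolic_lower_bound_of_decay
    (lam gam : ℕ → ℂ) (c : ℝ) (hc0 : 0 < c) (hc1 : c < 1)
    (hlt : ∀ k l : ℕ, ‖lam k * gam l‖ < 1)
    (hratio : ∀ k l : ℕ, 1 - ‖lam k * gam (l + 1)‖ ≤ c * (1 - ‖lam k * gam l‖)) :
    ∀ k l m : ℕ, m < l →
      (1 - c ^ (l - m)) / (1 + c ^ (l - m)) ≤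
        ‖lam k * gam l - lam k * gam m‖ /
          ‖1 - (starRingEnd ℂ) (lam k * gam l) * (lam k * gam m)‖ := by
  intro k l m hml
  set n := l - m with hn
  have hln : l = m + n := by omega
  set a := lam k * gam l with ha
  set b := lam k * gam m with hb
  set r := ‖a‖ with hr
  set s := ‖b‖ with hs
  have hr1 : r < 1 := hlt k l
  have hs1 : s < 1 := hlt k m
  have hr0 : 0 ≤ r := norm_nonneg _
  have hs0 : 0 ≤ s := norm_nonneg _
  have hdecay : 1 - r ≤ c ^ n * (1 - s) := by
    have := decay_iter lam gam c hratio hc0 k m n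
    rw [← hln] at this
    exact this
  have hcn1 : c ^ n < 1 := pow_lt_one₀ hc0.le hc1 (by omega)
  have hcn0 : 0 < c ^ n := pow_pos hc0 n
  -- r - s ≥ (1 - c^n)(1 - s)
  have hnum : (1 - c ^ n) * (1 - s) ≤ r - s := by nlinarith
  have hrs : 0 ≤ r - s := le_trans (by nlinarith) hnum
  -- 1 - r*s ≤ (1 + c^n)(1 - s)
  have hden : 1 - r * s ≤ (1 + c ^ n) * (1 - s) := by nlinarith
  have hrs1 : 0 < 1 - r * s := by nlinarith
  set N := ‖a - b‖ with hN
  set D := ‖1 - (starRingEnd ℂ) a * b‖ with hD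
  have hN0 : 0 ≤ N := norm_nonneg _
  have hNrs : r - s ≤ N := by
    have := norm_sub_norm_le a b
    simpa [← hr, ← hs] using this
  have hD2 : D ^ 2 = N ^ 2 + (1 - r ^ 2) * (1 - s ^ 2) := pseudohyp_sq_identity a b
  have hDge : 1 - r * s ≤ D := by
    have h1 : ‖(1 : ℂ)‖ - ‖(starRingEnd ℂ) a * b‖ ≤ D := norm_sub_norm_le _ _
    have h2 : ‖(starRingEnd ℂ) a * b‖ = r * s := by
      rw [norm_mul, RCLike.norm_conj]
    rw [h2] at h1
    simpa using h1
  have hDpos : 0 < D := lt_of_lt_of_le hrs1 hDge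
  -- step 2: (r-s)/(1-rs) ≤ N/D
  have hstep2 : (r - s) / (1 - r * s) ≤ N / D := by
    rw [div_le_div_iff₀ hrs1 hDpos]
    have hsq : ((r - s) * D) ^ 2 ≤ (N * (1 - r * s)) ^ 2 := by
      nlinarith [mul_nonneg (mul_nonneg (by nlinarith : (0:ℝ) ≤ 1 - r ^ 2)
        (by nlinarith : (0:ℝ) ≤ 1 - s ^ 2))
        (by nlinarith : (0:ℝ) ≤ N ^ 2 - (r - s) ^ 2)]
    have h := Real.sqrt_le_sqrt hsq
    rwa [Real.sqrt_sq (mul_nonneg hrs hDpos.le),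
      Real.sqrt_sq (mul_nonneg hN0 hrs1.le)] at h
  have hstep1 : (1 - c ^ n) / (1 + c ^ n) ≤ (r - s) / (1 - r * s) := by
    rw [div_le_div_iff₀ (by positivity) hrs1]
    have h1 : (1 - c ^ n) * (1 - r * s) ≤ (1 - c ^ n) * ((1 + c ^ n) * (1 - s)) :=
      mul_le_mul_of_nonneg_left hden (by linarith)
    have h2 : (1 + c ^ n) * ((1 - c ^ n) * (1 - s)) ≤ (1 + c ^ n) * (r - s) :=
      mul_le_mul_of_nonneg_left hnum (by positivity)
    linarith [h1, h2]
  exact le_trans hstep1 hstep2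
end
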